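/- arXiv:2601.07455 — 2 statements merged into one kernel-verified Lean document; each statement's English description precedes it below -/
import Mathlib

section
/- Let u⋆ be the solution of K u⋆ = f and ũ⋆ any solution of 𝒫 K ũ⋆ = 𝒫 f. For any ũ ∈ ℝ^{m+n}, if u = Z_k (Z_kᵀ K Z_k)⁻¹ Z_kᵀ f + 𝒫ᵀ ũ, then ‖u⋆ − u‖_H ≤ ‖ũ⋆ − ũ‖_H. -/
open Matrix

/-- The `G`-norm of a vector, `‖v‖_G = √(vᵀ G v)`. -/
noncomputable def gNorm {p : Type*} [Fintype p] (G : Matrix p p ℝ) (v : p → ℝ) : ℝ :=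
  Real.sqrt (v ⬝ᵥ G.mulVec v)

/-!
The error `u⋆ - u` equals `𝒫ᵀ (ũ⋆ - ũ)`. Indeed `Z Zᵀ H + 𝒫ᵀ = I`, `𝒫ᵀ Z = 0` and
`K 𝒫ᵀ = 𝒫 K` (by the singular-triplet relations), so `Zᵀ K = (Zᵀ K Z) Zᵀ H` and the
coarse part `Z (Zᵀ K Z)⁻¹ Zᵀ K u⋆` is `Z Zᵀ H u⋆ = u⋆ - 𝒫ᵀ u⋆`; moreover
`K 𝒫ᵀ ũ⋆ = 𝒫 f = K 𝒫ᵀ u⋆`, so `𝒫ᵀ ũ⋆ = 𝒫ᵀ u⋆`. Finally `𝒫ᵀ` is an `H`-orthogonal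
projector and cannot increase the `H`-norm.

Both `K` and `Zᵀ K Z = [[I, Σ], [Σᵀ, -I]]` are invertible, since a matrix `[[M, A], [Aᵀ, -N]]`
with `M`, `N` positive definite is: testing `K (x, y) = 0` against `(x, -y)` gives
`xᵀ M x + yᵀ N y = 0`.
-/

namespace Matrix

variable {m n p q : Type*} [Fintype m] [Fintype n] [Fintype p] [Fintype q]

theorem mulVec_dotProduct_mulVec_mulVec {R : Type*} [CommSemiring R] (B C : Matrix p p R)
    (y : p → R) : (B *ᵥ y) ⬝ᵥ C *ᵥ (B *ᵥ y) = y ⬝ᵥ (Bᵀ * C * B) *ᵥ y := by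
  rw [← mulVec_mulVec, ← mulVec_mulVec, mulVec_transpose, dotProduct_comm, dotProduct_mulVec,
    dotProduct_comm]

theorem gNorm_mulVec_le_of_isIdempotentElem [DecidableEq p] {H P : Matrix p p ℝ}
    (hH : H.PosSemidef) (hP : IsIdempotentElem P) (hHP : H * P = Pᵀ * H) (y : p → ℝ) :
    gNorm H (P *ᵥ y) ≤ gNorm H y := by
  have hPHP : Pᵀ * H * P = H * P := by rw [← hHP, mul_assoc, hP.eq]
  have hcompl : (1 - P)ᵀ * H * (1 - P) = H - Pᵀ * H * P := by
    simp only [transpose_sub, transpose_one, sub_mul, mul_sub, one_mul, mul_one]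
    rw [hPHP, hHP]
    abel
  have hnonneg := hH.dotProduct_mulVec_nonneg ((1 - P) *ᵥ y)
  rw [star_trivial, mulVec_dotProduct_mulVec_mulVec, hcompl, sub_mulVec, dotProduct_sub]
    at hnonneg
  unfold gNorm
  rw [mulVec_dotProduct_mulVec_mulVec]
  exact Real.sqrt_le_sqrt (by linarith)

theorem sumElim_neg_dotProduct_fromBlocks_mulVec {R : Type*} [CommRing R] (M : Matrix m m R)
    (A : Matrix m n R) (N : Matrix n n R) (x : m → R) (y : n → R) :
    Sum.elim x (-y) ⬝ᵥ fromBlocks M A Aᵀ (-N) *ᵥ Sum.elim x y = x ⬝ᵥ M *ᵥ x + y ⬝ᵥ N *ᵥ y := by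
  rw [fromBlocks_mulVec, sumElim_dotProduct_sumElim, Sum.elim_comp_inl, Sum.elim_comp_inr,
    mulVec_transpose]
  simp only [dotProduct_add, neg_dotProduct, dotProduct_neg, neg_mulVec, dotProduct_mulVec x A y,
    dotProduct_comm (x ᵥ* A) y]
  ring

section Saddle

variable [DecidableEq m] {M : Matrix m m ℝ} {N : Matrix n n ℝ}

theorem PosDef.posSemidef_fromBlocks_zero_zero (hM : M.PosDef) (hN : N.PosSemidef) :
    (fromBlocks M 0 0 N).PosSemidef := by
  have := hM.isUnit.invertible
  simpa using (hM.fromBlocks₁₁ 0 N).2 (by simpa using hN)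

variable [DecidableEq n]

theorem PosDef.isUnit_fromBlocks_transpose_neg (hM : M.PosDef) (hN : N.PosDef)
    (A : Matrix m n ℝ) : IsUnit (fromBlocks M A Aᵀ (-N)) := by
  rw [← mulVec_injective_iff_isUnit, ← coe_mulVecLin, injective_iff_map_eq_zero]
  intro v hv
  rw [← Sum.elim_comp_inl_inr v] at hv ⊢
  set x := v ∘ Sum.inl
  set y := v ∘ Sum.inr
  have hq := sumElim_neg_dotProduct_fromBlocks_mulVec M A N x y
  rw [mulVecLin_apply] at hv
  rw [hv, dotProduct_zero] at hq
  have hx := hM.posSemidef.dotProduct_mulVec_nonneg x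
  have hy := hN.posSemidef.dotProduct_mulVec_nonneg y
  simp only [star_trivial] at hx hy
  have hx0 : x = 0 := by
    by_contra h
    have := hM.dotProduct_mulVec_pos h
    rw [star_trivial] at this
    linarith
  have hy0 : y = 0 := by
    by_contra h
    have := hN.dotProduct_mulVec_pos h
    rw [star_trivial] at this
    linarith
  simp [hx0, hy0]

end Saddle

section Deflation

variable {R : Type*} [CommRing R] [DecidableEq p] [DecidableEq q] {K P : Matrix p p R}
  {Z : Matrix p q R} {W : Matrix q p R}

theorem inv_transpose_mul_mul_mul_transpose_mul (hT : IsUnit (Zᵀ * K * Z))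
    (hZW : Z * W + P = 1) (hPZ : P * Z = 0) (hKP : K * P = Pᵀ * K) :
    (Zᵀ * K * Z)⁻¹ * (Zᵀ * K) = W := by
  have hZK : Zᵀ * K = Zᵀ * K * Z * W := by
    calc Zᵀ * K = Zᵀ * K * (Z * W + P) := by rw [hZW, Matrix.mul_one]
      _ = Zᵀ * K * Z * W + (P * Z)ᵀ * K := by
        rw [Matrix.mul_add, transpose_mul, Matrix.mul_assoc _ K P, hKP]
        simp only [Matrix.mul_assoc]
      _ = Zᵀ * K * Z * W := by rw [hPZ, transpose_zero, Matrix.zero_mul, add_zero]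
  calc (Zᵀ * K * Z)⁻¹ * (Zᵀ * K) = (Zᵀ * K * Z)⁻¹ * (Zᵀ * K * Z * W) := congrArg _ hZK
    _ = W := nonsing_inv_mul_cancel_left _ _ ((isUnit_iff_isUnit_det _).1 hT)

theorem sub_deflated_solution_eq (hK : IsUnit K) (hT : IsUnit (Zᵀ * K * Z))
    (hZW : Z * W + P = 1) (hPZ : P * Z = 0) (hKP : K * P = Pᵀ * K) {f x y : p → R}
    (hx : K *ᵥ x = f) (hy : (Pᵀ * K) *ᵥ y = Pᵀ *ᵥ f) (y' : p → R) :
    x - (Z *ᵥ ((Zᵀ * K * Z)⁻¹ *ᵥ (Zᵀ *ᵥ f)) + P *ᵥ y') = P *ᵥ (y - y') := by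
  have hcoarse : Z *ᵥ ((Zᵀ * K * Z)⁻¹ *ᵥ (Zᵀ *ᵥ f)) = x - P *ᵥ x := by
    rw [← hx, mulVec_mulVec x Zᵀ K, mulVec_mulVec x _ (Zᵀ * K),
      inv_transpose_mul_mul_mul_transpose_mul hT hZW hPZ hKP, mulVec_mulVec,
      eq_sub_of_add_eq hZW, sub_mulVec, one_mulVec]
  have hPy : P *ᵥ y = P *ᵥ x := by
    refine mulVec_injective_of_isUnit hK ?_
    rw [mulVec_mulVec, mulVec_mulVec, hKP, hy, ← mulVec_mulVec, hx]
  rw [hcoarse, mulVec_sub, hPy]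
  abel

end Deflation

section BlockDeflation

variable {R : Type*} [CommRing R]

theorem fromBlocks_mul_fromBlocks_zero_zero {M : Matrix m m R} {A : Matrix m n R}
    {D : Matrix n n R} {P₁ : Matrix m m R} {P₂ : Matrix n n R} (hM : M * P₁ = P₁ᵀ * M)
    (hA : A * P₂ = P₁ᵀ * A) (hD : D * P₂ = P₂ᵀ * D) :
    fromBlocks M A Aᵀ D * fromBlocks P₁ 0 0 P₂
      = (fromBlocks P₁ 0 0 P₂)ᵀ * fromBlocks M A Aᵀ D := by
  have hA' : Aᵀ * P₁ = P₂ᵀ * Aᵀ := by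
    simpa only [transpose_mul, transpose_transpose] using (congrArg transpose hA).symm
  rw [fromBlocks_transpose, fromBlocks_multiply, fromBlocks_multiply]
  simp [hM, hA, hA', hD]

theorem isIdempotentElem_fromBlocks_zero_zero {P₁ : Matrix m m R} {P₂ : Matrix n n R}
    (h₁ : IsIdempotentElem P₁) (h₂ : IsIdempotentElem P₂) :
    IsIdempotentElem (fromBlocks P₁ 0 0 P₂) := by
  rw [IsIdempotentElem, fromBlocks_multiply, h₁.eq, h₂.eq]
  simp

variable [DecidableEq m] [DecidableEq n] {M : Matrix m m R} {N : Matrix n n R}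
  {A : Matrix m n R} {U : Matrix m q R} {V : Matrix n q R}

theorem transpose_one_sub_mul_transpose_mul (hM : M.IsSymm) (U : Matrix m q R) :
    (1 - U * Uᵀ * M)ᵀ = 1 - M * U * Uᵀ := by
  rw [transpose_sub, transpose_one, transpose_mul, transpose_mul, transpose_transpose, hM.eq,
    Matrix.mul_assoc]

theorem mul_one_sub_mul_transpose_mul (hM : M.IsSymm) (U : Matrix m q R) :
    M * (1 - U * Uᵀ * M) = (1 - U * Uᵀ * M)ᵀ * M := by
  rw [transpose_one_sub_mul_transpose_mul hM]
  simp only [Matrix.mul_sub, Matrix.sub_mul, Matrix.mul_one, Matrix.one_mul, Matrix.mul_assoc]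

-- The paper's `𝒫ᵀ`.
def deflationProj (M : Matrix m m R) (U : Matrix m q R) (N : Matrix n n R)
    (V : Matrix n q R) : Matrix (m ⊕ n) (m ⊕ n) R :=
  fromBlocks (1 - U * Uᵀ * M) 0 0 (1 - V * Vᵀ * N)

theorem fromBlocks_mul_transpose_mul_add_deflationProj (M : Matrix m m R) (N : Matrix n n R)
    (U : Matrix m q R) (V : Matrix n q R) :
    fromBlocks U 0 0 V * ((fromBlocks U 0 0 V)ᵀ * fromBlocks M 0 0 N) + deflationProj M U N V
      = 1 := by
  rw [deflationProj, fromBlocks_transpose, fromBlocks_multiply, fromBlocks_multiply,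
    fromBlocks_add, ← fromBlocks_one]
  simp [Matrix.mul_assoc]

theorem fromBlocks_zero_zero_mul_deflationProj (hM : M.IsSymm) (hN : N.IsSymm)
    (U : Matrix m q R) (V : Matrix n q R) :
    fromBlocks M 0 0 N * deflationProj M U N V
      = (deflationProj M U N V)ᵀ * fromBlocks M 0 0 N := by
  rw [deflationProj]
  simpa using fromBlocks_mul_fromBlocks_zero_zero (A := 0) (mul_one_sub_mul_transpose_mul hM U)
    (by simp) (mul_one_sub_mul_transpose_mul hN V)

variable [DecidableEq q]

theorem one_sub_mul_transpose_mul_mul_self (hU : Uᵀ * M * U = 1) :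
    (1 - U * Uᵀ * M) * U = 0 := by
  rw [Matrix.sub_mul, Matrix.one_mul, Matrix.mul_assoc, Matrix.mul_assoc, ← Matrix.mul_assoc Uᵀ,
    hU, Matrix.mul_one, sub_self]

theorem isIdempotentElem_one_sub_mul_transpose_mul (hU : Uᵀ * M * U = 1) :
    IsIdempotentElem (1 - U * Uᵀ * M) := by
  rw [IsIdempotentElem, Matrix.mul_sub, Matrix.mul_one, ← Matrix.mul_assoc, ← Matrix.mul_assoc,
    one_sub_mul_transpose_mul_mul_self hU, Matrix.zero_mul, Matrix.zero_mul, sub_zero]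

theorem mul_one_sub_mul_transpose_mul_of_singular_triplets {S : Matrix q q R} (hM : M.IsSymm)
    (hN : N.IsSymm) (hU : Uᵀ * M * U = 1) (hV : Vᵀ * N * V = 1) (hAV : A * V = M * U * S)
    (hAU : Aᵀ * U = N * V * S) :
    A * (1 - V * Vᵀ * N) = (1 - U * Uᵀ * M)ᵀ * A := by
  have hUAV : Uᵀ * A * V = S := by
    rw [Matrix.mul_assoc, hAV, ← Matrix.mul_assoc, ← Matrix.mul_assoc, hU, Matrix.one_mul]
  have hVAU : Vᵀ * Aᵀ * U = S := by
    rw [Matrix.mul_assoc, hAU, ← Matrix.mul_assoc, ← Matrix.mul_assoc, hV, Matrix.one_mul]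
  have hS : Sᵀ = S := by
    conv_lhs => rw [← hUAV, transpose_mul, transpose_mul, transpose_transpose,
      ← Matrix.mul_assoc, hVAU]
  have hUA : Uᵀ * A = S * Vᵀ * N := by
    rw [← transpose_transpose A, ← transpose_mul, hAU, transpose_mul, transpose_mul, hS, hN.eq,
      Matrix.mul_assoc]
  rw [transpose_one_sub_mul_transpose_mul hM, Matrix.mul_sub, Matrix.sub_mul, Matrix.mul_one,
    Matrix.one_mul]
  congr 1
  calc A * (V * Vᵀ * N) = A * V * Vᵀ * N := by simp only [Matrix.mul_assoc]
    _ = M * U * Uᵀ * A := by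
      rw [hAV, Matrix.mul_assoc (M * U) Uᵀ, hUA]
      simp only [Matrix.mul_assoc]

theorem deflationProj_mul_fromBlocks (hU : Uᵀ * M * U = 1) (hV : Vᵀ * N * V = 1) :
    deflationProj M U N V * fromBlocks U 0 0 V = 0 := by
  rw [deflationProj, fromBlocks_multiply, one_sub_mul_transpose_mul_mul_self hU,
    one_sub_mul_transpose_mul_mul_self hV]
  simp

theorem isIdempotentElem_deflationProj (hU : Uᵀ * M * U = 1) (hV : Vᵀ * N * V = 1) :
    IsIdempotentElem (deflationProj M U N V) :=
  isIdempotentElem_fromBlocks_zero_zero (isIdempotentElem_one_sub_mul_transpose_mul hU)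
    (isIdempotentElem_one_sub_mul_transpose_mul hV)

theorem fromBlocks_transpose_neg_mul_deflationProj {S : Matrix q q R} (hM : M.IsSymm)
    (hN : N.IsSymm) (hU : Uᵀ * M * U = 1) (hV : Vᵀ * N * V = 1) (hAV : A * V = M * U * S)
    (hAU : Aᵀ * U = N * V * S) :
    fromBlocks M A Aᵀ (-N) * deflationProj M U N V
      = (deflationProj M U N V)ᵀ * fromBlocks M A Aᵀ (-N) :=
  fromBlocks_mul_fromBlocks_zero_zero (mul_one_sub_mul_transpose_mul hM U)
    (mul_one_sub_mul_transpose_mul_of_singular_triplets hM hN hU hV hAV hAU)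
    (by rw [Matrix.neg_mul, Matrix.mul_neg, mul_one_sub_mul_transpose_mul hN V])

end BlockDeflation

theorem isUnit_transpose_fromBlocks_mul_mul [DecidableEq m] [DecidableEq n] [DecidableEq q]
    {M : Matrix m m ℝ} {N : Matrix n n ℝ} (A : Matrix m n ℝ) {U : Matrix m q ℝ}
    {V : Matrix n q ℝ} (hU : Uᵀ * M * U = 1) (hV : Vᵀ * N * V = 1) :
    IsUnit ((fromBlocks U 0 0 V)ᵀ * fromBlocks M A Aᵀ (-N) * fromBlocks U 0 0 V) := by
  have hT : (fromBlocks U 0 0 V)ᵀ * fromBlocks M A Aᵀ (-N) * fromBlocks U 0 0 V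
      = fromBlocks 1 (Uᵀ * A * V) (Uᵀ * A * V)ᵀ (-1) := by
    rw [fromBlocks_transpose, fromBlocks_multiply, fromBlocks_multiply]
    simp [hU, hV, Matrix.mul_assoc]
  rw [hT]
  exact PosDef.one.isUnit_fromBlocks_transpose_neg PosDef.one _

end Matrix

theorem deflated_error_bound_general (m n k : ℕ)
    (M : Matrix (Fin m) (Fin m) ℝ) (N : Matrix (Fin n) (Fin n) ℝ)
    (A : Matrix (Fin m) (Fin n) ℝ)
    (hM : M.PosDef) (hN : N.PosDef)
    (Uk : Matrix (Fin m) (Fin k) ℝ) (Vk : Matrix (Fin n) (Fin k) ℝ)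
    (Sig : Matrix (Fin k) (Fin k) ℝ)
    (hUk : Ukᵀ * M * Uk = 1) (hVk : Vkᵀ * N * Vk = 1)
    (hAV : A * Vk = M * Uk * Sig) (hAU : Aᵀ * Uk = N * Vk * Sig)
    (P : Matrix (Fin m) (Fin m) ℝ) (hP : P = 1 - M * Uk * Ukᵀ)
    (Q : Matrix (Fin n) (Fin n) ℝ) (hQ : Q = 1 - Vk * Vkᵀ * N)
    (K : Matrix (Fin m ⊕ Fin n) (Fin m ⊕ Fin n) ℝ)
    (hK : K = Matrix.fromBlocks M A Aᵀ (-N))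
    (H : Matrix (Fin m ⊕ Fin n) (Fin m ⊕ Fin n) ℝ)
    (hH : H = Matrix.fromBlocks M 0 0 N)
    (Pcal : Matrix (Fin m ⊕ Fin n) (Fin m ⊕ Fin n) ℝ)
    (hPcal : Pcal = Matrix.fromBlocks P 0 0 Qᵀ)
    (Z : Matrix (Fin m ⊕ Fin n) (Fin k ⊕ Fin k) ℝ)
    (hZ : Z = Matrix.fromBlocks Uk 0 0 Vk)
    (f ustar utstar ut u : Fin m ⊕ Fin n → ℝ)
    (hustar : K.mulVec ustar = f)
    (hutstar : (Pcal * K).mulVec utstar = Pcal.mulVec f)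
    (hu : u = Z.mulVec (((Zᵀ * K * Z)⁻¹).mulVec (Zᵀ.mulVec f)) + Pcalᵀ.mulVec ut) :
    gNorm H (ustar - u) ≤ gNorm H (utstar - ut) := by
  subst hK hH hPcal hZ hP hQ
  have hMs : M.IsSymm := isHermitian_iff_isSymm.1 hM.isHermitian
  have hNs : N.IsSymm := isHermitian_iff_isSymm.1 hN.isHermitian
  have hPcal : fromBlocks (1 - M * Uk * Ukᵀ) 0 0 (1 - Vk * Vkᵀ * N)ᵀ =
      (deflationProj M Uk N Vk)ᵀ := by
    rw [deflationProj, fromBlocks_transpose, transpose_one_sub_mul_transpose_mul hMs,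
      transpose_zero, transpose_zero]
  rw [hPcal] at hutstar
  rw [hPcal, transpose_transpose] at hu
  rw [hu, sub_deflated_solution_eq (hM.isUnit_fromBlocks_transpose_neg hN A)
    (isUnit_transpose_fromBlocks_mul_mul A hUk hVk)
    (fromBlocks_mul_transpose_mul_add_deflationProj M N Uk Vk)
    (deflationProj_mul_fromBlocks hUk hVk)
    (fromBlocks_transpose_neg_mul_deflationProj hMs hNs hUk hVk hAV hAU) hustar hutstar ut]
  exact gNorm_mulVec_le_of_isIdempotentElem (hM.posSemidef_fromBlocks_zero_zero hN.posSemidef)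
    (isIdempotentElem_deflationProj hUk hVk)
    (fromBlocks_zero_zero_mul_deflationProj hMs hNs Uk Vk) _

/-- If `u⋆` solves `K u⋆ = f`, `ũ⋆` solves `Pcal K ũ⋆ = Pcal f`, and
`u = Z_k (Z_kᵀ K Z_k)⁻¹ Z_kᵀ f + Pcalᵀ ũ`, then `‖u⋆ − u‖_H ≤ ‖ũ⋆ − ũ‖_H`. -/
theorem deflated_error_bound (m n k : ℕ)
    (M : Matrix (Fin m) (Fin m) ℝ) (N : Matrix (Fin n) (Fin n) ℝ)
    (A : Matrix (Fin m) (Fin n) ℝ)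
    (hM : M.PosDef) (hN : N.PosDef)
    (Uk : Matrix (Fin m) (Fin k) ℝ) (Vk : Matrix (Fin n) (Fin k) ℝ)
    (Sig : Matrix (Fin k) (Fin k) ℝ)
    (hSigDiag : ∀ i j, i ≠ j → Sig i j = 0) (hSigNonneg : ∀ i, 0 ≤ Sig i i)
    (hUk : Ukᵀ * M * Uk = 1) (hVk : Vkᵀ * N * Vk = 1)
    (hAV : A * Vk = M * Uk * Sig) (hAU : Aᵀ * Uk = N * Vk * Sig)
    (P : Matrix (Fin m) (Fin m) ℝ) (hP : P = 1 - M * Uk * Ukᵀ)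
    (Q : Matrix (Fin n) (Fin n) ℝ) (hQ : Q = 1 - Vk * Vkᵀ * N)
    (K : Matrix (Fin m ⊕ Fin n) (Fin m ⊕ Fin n) ℝ)
    (hK : K = Matrix.fromBlocks M A Aᵀ (-N))
    (H : Matrix (Fin m ⊕ Fin n) (Fin m ⊕ Fin n) ℝ)
    (hH : H = Matrix.fromBlocks M 0 0 N)
    (Pcal : Matrix (Fin m ⊕ Fin n) (Fin m ⊕ Fin n) ℝ)
    (hPcal : Pcal = Matrix.fromBlocks P 0 0 Qᵀ)
    (Z : Matrix (Fin m ⊕ Fin n) (Fin k ⊕ Fin k) ℝ)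
    (hZ : Z = Matrix.fromBlocks Uk 0 0 Vk)
    (f ustar utstar ut u : Fin m ⊕ Fin n → ℝ)
    (hustar : K.mulVec ustar = f)
    (hutstar : (Pcal * K).mulVec utstar = Pcal.mulVec f)
    (hu : u = Z.mulVec (((Zᵀ * K * Z)⁻¹).mulVec (Zᵀ.mulVec f)) + Pcalᵀ.mulVec ut) :
    gNorm H (ustar - u) ≤ gNorm H (utstar - ut) :=
  deflated_error_bound_general m n k M N A hM hN Uk Vk Sig hUk hVk hAV hAU P hP Q hQ K hK H hH Pcal
    hPcal Z hZ f ustar utstar ut u hustar hutstar hu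
end

section
/- Let d = min(m, n) and k ≤ d. The characteristic polynomial of the deflated preconditioned matrix H^{−1/2} 𝒫 K H^{−1/2} is X^{2k} (X − 1)^{m−d} (X + 1)^{n−d} ∏_{i=k+1}^{d} (X² − (σ_i² + 1)); in particular its eigenvalues are ±√(σ_i² + 1) for i = k+1, …, d, together with 1 with multiplicity m − d, −1 with multiplicity n − d, and 0 with multiplicity 2k. -/
/-!
With `G = diag(Ũ, Ṽ)` we have `H^{-1/2} H^{-1/2} = H⁻¹ = G Gᵀ`, so, since `AB` and `BA` have the
same characteristic polynomial, `H^{-1/2} 𝒫 K H^{-1/2}` has the characteristic polynomial of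
`Gᵀ 𝒫 K G`. In the elliptic singular bases the deflation projectors become the coordinate
projection `D = diag(0, …, 0, 1, …, 1)` (with `k` zeros), and `Gᵀ 𝒫 K G = [[D, DΣ], [(DΣ)ᵀ, -D]]`.
A Schur complement over the fraction field of `ℝ[X]` evaluates its characteristic polynomial:
with `D = diag δ`, each index `i < min m n` contributes `(X - δᵢ)(X + δᵢ) - δᵢ² σᵢ²`, and the
unmatched rows and columns contribute `X - 1` and `X + 1`.
-/

open Matrix Polynomial
open scoped MatrixOrder

open Finset in
theorem Finset.prod_range_mul_prod_range_ite {M : Type*} [CommMonoid M] (a b c : ℕ → M)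
    (m n : ℕ) :
    (∏ j ∈ range n, b j) * ∏ i ∈ range m, (if i < n then c i else a i) =
      (∏ i ∈ range (min m n), b i * c i) * (∏ i ∈ Ico (min m n) m, a i) *
        ∏ j ∈ Ico (min m n) n, b j := by
  rw [prod_mul_distrib]
  rcases le_total m n with h | h
  · rw [min_eq_left h, ← prod_range_mul_prod_Ico b h, Ico_self, prod_empty,
      prod_congr rfl fun i hi => if_pos ((mem_range.mp hi).trans_le h)]
    simp only [mul_one, mul_comm, mul_left_comm]
  · rw [min_eq_right h, ← prod_range_mul_prod_Ico _ h, Ico_self, prod_empty,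
      prod_congr rfl fun i hi => if_pos (mem_range.mp hi),
      prod_congr rfl fun i hi => if_neg (not_lt.mpr (mem_Ico.mp hi).1)]
    simp only [mul_one, mul_comm, mul_left_comm]

namespace Matrix

open Finset

variable {R : Type*}

/-- Indexed by `ℕ`, so that the two rectangular blocks of a square block matrix and the square
diagonal blocks can share one diagonal function. -/
def rectDiagonal [Zero R] (m n : ℕ) (s : ℕ → R) : Matrix (Fin m) (Fin n) R :=
  of fun i j => if (i : ℕ) = j then s i else 0

section Zero

variable [Zero R] {m n : ℕ}

@[simp]
theorem rectDiagonal_apply (s : ℕ → R) (i : Fin m) (j : Fin n) :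
    rectDiagonal m n s i j = if (i : ℕ) = j then s i else 0 := rfl

theorem exists_eq_rectDiagonal {S : Matrix (Fin m) (Fin n) R}
    (hS : ∀ (i : Fin m) (j : Fin n), (i : ℕ) ≠ j → S i j = 0) : ∃ s, S = rectDiagonal m n s := by
  refine ⟨fun i => if h : i < m ∧ i < n then S ⟨i, h.1⟩ ⟨i, h.2⟩ else 0, ?_⟩
  ext ⟨i, hi⟩ ⟨j, hj⟩
  by_cases hij : i = j
  · subst hij; simp [hi, hj]
  · simp [hij, hS ⟨i, hi⟩ ⟨j, hj⟩ hij]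

theorem rectDiagonal_map {S : Type*} [Zero S] (s : ℕ → R) {f : R → S} (hf : f 0 = 0) :
    (rectDiagonal m n s).map f = rectDiagonal m n (f ∘ s) := by
  ext i j; by_cases h : (i : ℕ) = j <;> simp [h, hf]

end Zero

theorem neg_rectDiagonal [NegZeroClass R] {m n : ℕ} (s : ℕ → R) :
    -rectDiagonal m n s = rectDiagonal m n (-s) := by
  ext i j; by_cases h : (i : ℕ) = j <;> simp [h]

section Semiring

variable [NonUnitalNonAssocSemiring R] {m n : ℕ}

theorem diagonal_mul_rectDiagonal (d s : ℕ → R) :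
    diagonal (fun i : Fin m => d i) * rectDiagonal m n s = rectDiagonal m n (d * s) := by
  ext i j; simp

theorem diagonal_mul_rectDiagonal_transpose (d s : ℕ → R) :
    diagonal (fun j : Fin n => d j) * (rectDiagonal m n s)ᵀ = (rectDiagonal m n (d * s))ᵀ := by
  ext j i; by_cases h : (i : ℕ) = j <;> simp [h]

theorem rectDiagonal_mul_diagonal (s c : ℕ → R) :
    rectDiagonal m n s * diagonal (fun j : Fin n => c j) = rectDiagonal m n (s * c) := by
  ext i j; by_cases h : (i : ℕ) = j <;> simp [h]

theorem rectDiagonal_mul_transpose (s t : ℕ → R) :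
    rectDiagonal m n s * (rectDiagonal m n t)ᵀ =
      diagonal fun i : Fin m => if (i : ℕ) < n then s i * t i else 0 := by
  have hsum : ∀ x y : ℕ,
      ∑ j : Fin n, (if x = j then s x else 0) * (if y = j then t y else 0) =
        if x = y ∧ x < n then s x * t x else 0 := by
    intro x y
    rw [Fin.sum_univ_eq_sum_range
      (fun j => (if x = j then s x else 0) * (if y = j then t y else 0))]
    simp only [mul_ite, ite_mul, zero_mul, mul_zero]
    rw [sum_ite_eq]
    by_cases h : x = y <;> simp [h]
  ext i i'
  simp only [mul_apply, transpose_apply, rectDiagonal_apply, hsum, diagonal_apply, Fin.val_inj]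
  by_cases h : i = i' <;> simp [h]

end Semiring

theorem det_fromBlocks_diagonal_rectDiagonal_of_field {F : Type*} [Field F] {m n : ℕ}
    (a b s : ℕ → F) (hb : ∀ j < n, b j ≠ 0) :
    (fromBlocks (diagonal fun i : Fin m => a i) (rectDiagonal m n s) (rectDiagonal m n s)ᵀ
        (diagonal fun j : Fin n => b j)).det =
      (∏ i ∈ range (min m n), (a i * b i - s i ^ 2)) * (∏ i ∈ Ico (min m n) m, a i) *
        ∏ j ∈ Ico (min m n) n, b j := by
  have hinv : diagonal (fun j : Fin n => b j) * diagonal (fun j : Fin n => (b j)⁻¹) = 1 := by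
    rw [diagonal_mul_diagonal, ← diagonal_one]
    exact congrArg diagonal (funext fun j => mul_inv_cancel₀ (hb j j.isLt))
  let := invertibleOfRightInverse _ _ hinv
  rw [det_fromBlocks₂₂, invOf_eq_right_inv hinv, rectDiagonal_mul_diagonal s fun j => (b j)⁻¹,
    rectDiagonal_mul_transpose, diagonal_sub, det_diagonal, det_diagonal,
    Fin.prod_univ_eq_prod_range (fun j => b j),
    Fin.prod_univ_eq_prod_range
      (fun i => a i - if i < n then (s * fun j => (b j)⁻¹) i * s i else 0)]
  simp only [sub_ite, sub_zero]
  rw [prod_range_mul_prod_range_ite]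
  congr 2
  refine prod_congr rfl fun i hi => ?_
  have := hb i ((mem_range.mp hi).trans_le (min_le_right m n))
  simp only [Pi.mul_apply]
  field_simp

theorem det_fromBlocks_diagonal_rectDiagonal [CommRing R] [IsDomain R] {m n : ℕ}
    (a b s : ℕ → R) (hb : ∀ j < n, b j ≠ 0) :
    (fromBlocks (diagonal fun i : Fin m => a i) (rectDiagonal m n s) (rectDiagonal m n s)ᵀ
        (diagonal fun j : Fin n => b j)).det =
      (∏ i ∈ range (min m n), (a i * b i - s i ^ 2)) * (∏ i ∈ Ico (min m n) m, a i) *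
        ∏ j ∈ Ico (min m n) n, b j := by
  let φ := algebraMap R (FractionRing R)
  apply IsFractionRing.injective R (FractionRing R)
  rw [RingHom.map_det, RingHom.mapMatrix_apply, fromBlocks_map, diagonal_map (map_zero φ),
    diagonal_map (map_zero φ), transpose_map, rectDiagonal_map _ (map_zero φ)]
  refine (det_fromBlocks_diagonal_rectDiagonal_of_field (φ ∘ a) (φ ∘ b) (φ ∘ s)
    fun j hj => (map_ne_zero_iff φ (IsFractionRing.injective R _)).mpr (hb j hj)).trans ?_
  simp [φ, map_prod]

theorem charpoly_fromBlocks_diagonal_rectDiagonal [CommRing R] [IsDomain R] {m n : ℕ}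
    (a b s : ℕ → R) :
    (fromBlocks (diagonal fun i : Fin m => a i) (rectDiagonal m n s) (rectDiagonal m n s)ᵀ
        (diagonal fun j : Fin n => b j)).charpoly =
      (∏ i ∈ range (min m n), ((X - C (a i)) * (X - C (b i)) - C (s i) ^ 2)) *
        (∏ i ∈ Ico (min m n) m, (X - C (a i))) * ∏ j ∈ Ico (min m n) n, (X - C (b j)) := by
  rw [charpoly, charmatrix_fromBlocks, charmatrix_diagonal, charmatrix_diagonal, transpose_map,
    rectDiagonal_map _ (map_zero C), ← transpose_neg, neg_rectDiagonal,
    det_fromBlocks_diagonal_rectDiagonal (fun i => X - C (a i)) (fun j => X - C (b j)) (-(C ∘ s))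
      fun j _ => X_sub_C_ne_zero _]
  simp

def deflationWeight (R : Type*) [Zero R] [One R] (k i : ℕ) : R := if i < k then 0 else 1

theorem charpoly_fromBlocks_deflationWeight_rectDiagonal [CommRing R] [IsDomain R] {m n k : ℕ}
    (hk : k ≤ min m n) (σ : ℕ → R) :
    (fromBlocks (diagonal fun i : Fin m => deflationWeight R k i)
        (rectDiagonal m n (deflationWeight R k * σ)) (rectDiagonal m n (deflationWeight R k * σ))ᵀ
        (-diagonal fun j : Fin n => deflationWeight R k j)).charpoly =
      X ^ (2 * k) * (X - 1) ^ (m - min m n) * (X + 1) ^ (n - min m n) *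
        ∏ i ∈ range (min m n), if k ≤ i then X ^ 2 - C (σ i ^ 2 + 1) else 1 := by
  rw [diagonal_neg]
  refine (charpoly_fromBlocks_diagonal_rectDiagonal (deflationWeight R k) (-deflationWeight R k)
    _).trans ?_
  simp only [Pi.neg_apply, Pi.mul_apply]
  have hm : ∏ i ∈ Ico (min m n) m, (X - C (deflationWeight R k i)) = (X - 1) ^ (m - min m n) := by
    rw [prod_congr rfl fun i hi => ?_, prod_const, Nat.card_Ico]
    simp [deflationWeight, not_lt.mpr (hk.trans (mem_Ico.mp hi).1)]
  have hn : ∏ j ∈ Ico (min m n) n, (X - C (-deflationWeight R k j)) =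
      (X + 1) ^ (n - min m n) := by
    rw [prod_congr rfl fun i hi => ?_, prod_const, Nat.card_Ico]
    simp [deflationWeight, not_lt.mpr (hk.trans (mem_Ico.mp hi).1)]
  have hterm : ∀ i, (X - C (deflationWeight R k i)) * (X - C (-deflationWeight R k i)) -
      C (deflationWeight R k i * σ i) ^ 2 =
        (if i < k then X ^ 2 else 1) * (if k ≤ i then X ^ 2 - C (σ i ^ 2 + 1) else 1) := by
    intro i
    by_cases h : i < k
    · simp [deflationWeight, h, sq]
    · simp [deflationWeight, h, not_lt.mp h]
      ring
  rw [hm, hn, prod_congr rfl fun i _ => hterm i, prod_mul_distrib,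
    ← prod_range_mul_prod_Ico _ hk, prod_congr rfl fun i hi => if_pos (mem_range.mp hi),
    prod_const, card_range, ← pow_mul,
    prod_congr rfl fun i hi => if_neg (not_lt.mpr (mem_Ico.mp hi).1), prod_const_one, mul_one]
  ring

section Congruence

variable [CommRing R] {ι κ : Type*} [Fintype ι] [Fintype κ]

theorem inv_eq_mul_transpose_of_transpose_mul_mul_eq_one [DecidableEq ι] {W M : Matrix ι ι R}
    (h : Wᵀ * M * W = 1) : M⁻¹ = W * Wᵀ :=
  inv_eq_left_inv <| by rw [Matrix.mul_assoc, mul_eq_one_comm.mp h]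

theorem charpoly_mul_mul_eq_of_mul_self_eq [DecidableEq ι] {S G : Matrix ι ι R} (Y : Matrix ι ι R)
    (h : S * S = G * Gᵀ) : (S * Y * S).charpoly = (Gᵀ * Y * G).charpoly := by
  rw [Matrix.mul_assoc, charpoly_mul_comm, Matrix.mul_assoc, h, ← Matrix.mul_assoc,
    charpoly_mul_comm, Matrix.mul_assoc]

theorem transpose_fromBlocks_mul_mul_fromBlocks (W₁ : Matrix ι ι R) (W₂ : Matrix κ κ R)
    (P : Matrix ι ι R) (Q : Matrix κ κ R) (A : Matrix ι ι R) (B : Matrix ι κ R)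
    (C : Matrix κ ι R) (D : Matrix κ κ R) :
    (fromBlocks W₁ 0 0 W₂)ᵀ * (fromBlocks P 0 0 Q * fromBlocks A B C D) * fromBlocks W₁ 0 0 W₂ =
      fromBlocks (W₁ᵀ * P * A * W₁) (W₁ᵀ * P * B * W₂) (W₂ᵀ * Q * C * W₁) (W₂ᵀ * Q * D * W₂) := by
  simp [fromBlocks_transpose, fromBlocks_multiply, Matrix.mul_assoc]

theorem transpose_mul_one_sub_mul_submatrix_mul [DecidableEq ι] {W M : Matrix ι ι R}
    (hW : Wᵀ * M * W = 1) (e : κ → ι) :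
    Wᵀ * (1 - M * W.submatrix id e * (W.submatrix id e)ᵀ) * M * W =
      1 - (1 : Matrix ι ι R).submatrix id e * (1 : Matrix ι ι R).submatrix e id := by
  have hleft : Wᵀ * M * W.submatrix id e = (1 : Matrix ι ι R).submatrix id e := by
    rw [← hW]; ext; simp [mul_apply]
  have hright : (W.submatrix id e)ᵀ * M * W = (1 : Matrix ι ι R).submatrix e id := by
    rw [← hW]; ext; simp [mul_apply]
  calc Wᵀ * (1 - M * W.submatrix id e * (W.submatrix id e)ᵀ) * M * W
      = Wᵀ * M * W - (Wᵀ * M * W.submatrix id e) * ((W.submatrix id e)ᵀ * M * W) := by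
        simp only [Matrix.mul_sub, Matrix.sub_mul, Matrix.mul_one, Matrix.mul_assoc]
    _ = _ := by rw [hW, hleft, hright]

end Congruence

theorem one_sub_submatrix_castLE_mul [Ring R] {k p : ℕ} (h : k ≤ p) :
    1 - (1 : Matrix (Fin p) (Fin p) R).submatrix id (Fin.castLE h) *
        (1 : Matrix (Fin p) (Fin p) R).submatrix (Fin.castLE h) id =
      diagonal fun i : Fin p => deflationWeight R k i := by
  ext i j
  by_cases hij : i = j
  · subst hij
    have hsum : ∑ x : Fin k, (if (x : ℕ) = i then (1 : R) else 0) =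
        if (i : ℕ) < k then 1 else 0 := by
      rw [Fin.sum_univ_eq_sum_range (fun x => if x = (i : ℕ) then (1 : R) else 0), sum_ite_eq']
      simp
    simp only [sub_apply, mul_apply, submatrix_apply, id_eq, one_apply, Fin.ext_iff,
      Fin.val_castLE, @eq_comm ℕ i, mul_ite, mul_one, mul_zero, ← ite_and, and_self, if_true,
      hsum, diagonal_apply_eq, deflationWeight]
    split_ifs <;> simp
  · have hterm : ∀ x : Fin k, (if i = Fin.castLE h x then (1 : R) else 0) *
        (if Fin.castLE h x = j then 1 else 0) = 0 := by
      intro x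
      by_cases hx : i = Fin.castLE h x
      · simp [← hx, hij]
      · simp [hx]
    simp [mul_apply, one_apply, hij, hterm]

theorem fromBlocks_inv_sqrt_mul_self {ι κ : Type*} [Fintype ι] [DecidableEq ι] [Fintype κ]
    [DecidableEq κ] {M : Matrix ι ι ℝ} {N : Matrix κ κ ℝ} {U : Matrix ι ι ℝ} {V : Matrix κ κ ℝ}
    (hM : M.PosSemidef) (hN : N.PosSemidef) (hU : Uᵀ * M * U = 1) (hV : Vᵀ * N * V = 1) :
    fromBlocks (CFC.sqrt M)⁻¹ 0 0 (CFC.sqrt N)⁻¹ * fromBlocks (CFC.sqrt M)⁻¹ 0 0 (CFC.sqrt N)⁻¹ =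
      fromBlocks U 0 0 V * (fromBlocks U 0 0 V)ᵀ := by
  rw [fromBlocks_transpose, fromBlocks_multiply, fromBlocks_multiply, ← Matrix.mul_inv_rev,
    ← Matrix.mul_inv_rev, CFC.sqrt_mul_sqrt_self M hM.nonneg, CFC.sqrt_mul_sqrt_self N hN.nonneg,
    inv_eq_mul_transpose_of_transpose_mul_mul_eq_one hU,
    inv_eq_mul_transpose_of_transpose_mul_mul_eq_one hV]
  simp

end Matrix

theorem charpoly_deflated_preconditioned_general (m n k : ℕ) (hk : k ≤ min m n)
    (M : Matrix (Fin m) (Fin m) ℝ) (N : Matrix (Fin n) (Fin n) ℝ)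
    (A : Matrix (Fin m) (Fin n) ℝ)
    (hM : M.PosDef) (hN : N.PosDef)
    (Ut : Matrix (Fin m) (Fin m) ℝ) (Vt : Matrix (Fin n) (Fin n) ℝ)
    (Sig : Matrix (Fin m) (Fin n) ℝ)
    (hUt : Utᵀ * M * Ut = 1) (hVt : Vtᵀ * N * Vt = 1)
    (hSigDiag : ∀ (i : Fin m) (j : Fin n), (i : ℕ) ≠ (j : ℕ) → Sig i j = 0)
    (hA : A = M * Ut * Sig * Vtᵀ * N)
    (Uk : Matrix (Fin m) (Fin k) ℝ)
    (hUkdef : Uk = Ut.submatrix id (Fin.castLE (hk.trans (min_le_left m n))))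
    (Vk : Matrix (Fin n) (Fin k) ℝ)
    (hVkdef : Vk = Vt.submatrix id (Fin.castLE (hk.trans (min_le_right m n))))
    (P : Matrix (Fin m) (Fin m) ℝ) (hP : P = 1 - M * Uk * Ukᵀ)
    (Q : Matrix (Fin n) (Fin n) ℝ) (hQ : Q = 1 - Vk * Vkᵀ * N)
    (K : Matrix (Fin m ⊕ Fin n) (Fin m ⊕ Fin n) ℝ)
    (hK : K = Matrix.fromBlocks M A Aᵀ (-N))
    (Pcal : Matrix (Fin m ⊕ Fin n) (Fin m ⊕ Fin n) ℝ)
    (hPcal : Pcal = Matrix.fromBlocks P 0 0 Qᵀ)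
    (Hinvhalf : Matrix (Fin m ⊕ Fin n) (Fin m ⊕ Fin n) ℝ)
    (hHinvhalf : Hinvhalf =
      Matrix.fromBlocks (CFC.sqrt M)⁻¹ 0 0 (CFC.sqrt N)⁻¹) :
    (Hinvhalf * Pcal * K * Hinvhalf).charpoly =
      X ^ (2 * k) * (X - 1) ^ (m - min m n) * (X + 1) ^ (n - min m n) *
        ∏ i : Fin (min m n),
          (if k ≤ (i : ℕ) then
            X ^ 2 - C ((Sig (Fin.castLE (min_le_left m n) i)
                (Fin.castLE (min_le_right m n) i)) ^ 2 + 1)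
          else 1) := by
  obtain ⟨σ, hσ⟩ := exists_eq_rectDiagonal hSigDiag
  have hMt : Mᵀ = M := (isHermitian_iff_isSymm.mp hM.1).eq
  have hNt : Nᵀ = N := (isHermitian_iff_isSymm.mp hN.1).eq
  have hPM : Utᵀ * P * M * Ut = diagonal fun i : Fin m => deflationWeight ℝ k i := by
    rw [hP, hUkdef, transpose_mul_one_sub_mul_submatrix_mul hUt, one_sub_submatrix_castLE_mul]
  have hQN : Vtᵀ * Qᵀ * N * Vt = diagonal fun j : Fin n => deflationWeight ℝ k j := by
    have hQt : Qᵀ = 1 - N * Vk * Vkᵀ := by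
      rw [hQ, transpose_sub, transpose_one, transpose_mul, transpose_mul, transpose_transpose,
        hNt, Matrix.mul_assoc]
    rw [hQt, hVkdef, transpose_mul_one_sub_mul_submatrix_mul hVt, one_sub_submatrix_castLE_mul]
  have hPA : Utᵀ * P * A * Vt = rectDiagonal m n (deflationWeight ℝ k * σ) :=
    calc Utᵀ * P * A * Vt = (Utᵀ * P * M * Ut) * rectDiagonal m n σ * (Vtᵀ * N * Vt) := by
          rw [hA, hσ]; simp only [Matrix.mul_assoc]
      _ = _ := by rw [hPM, hVt, Matrix.mul_one, diagonal_mul_rectDiagonal]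
  have hQA : Vtᵀ * Qᵀ * Aᵀ * Ut = (rectDiagonal m n (deflationWeight ℝ k * σ))ᵀ :=
    calc Vtᵀ * Qᵀ * Aᵀ * Ut = (Vtᵀ * Qᵀ * N * Vt) * (rectDiagonal m n σ)ᵀ * (Utᵀ * M * Ut) := by
          rw [hA, hσ]
          simp only [transpose_mul, transpose_transpose, hMt, hNt, Matrix.mul_assoc]
      _ = _ := by rw [hQN, hUt, Matrix.mul_one, diagonal_mul_rectDiagonal_transpose]
  rw [Matrix.mul_assoc Hinvhalf, hHinvhalf, charpoly_mul_mul_eq_of_mul_self_eq _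
      (fromBlocks_inv_sqrt_mul_self hM.posSemidef hN.posSemidef hUt hVt),
    hPcal, hK, transpose_fromBlocks_mul_mul_fromBlocks, hPM, hPA, hQA, Matrix.mul_neg,
    Matrix.neg_mul, hQN, charpoly_fromBlocks_deflationWeight_rectDiagonal hk]
  simp only [hσ, rectDiagonal_apply, Fin.val_castLE, ↓reduceIte,
    Fin.prod_univ_eq_prod_range (fun i => if k ≤ i then X ^ 2 - C (σ i ^ 2 + 1) else 1)]

/-- The characteristic polynomial of the deflated preconditioned matrix
`H^{−1/2} Pcal K H^{−1/2}` is
`X^{2k} (X − 1)^{m−d} (X + 1)^{n−d} ∏_{i=k+1}^{d} (X² − (σ_i² + 1))` with `d = min m n`;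
in particular its eigenvalues are `±√(σ_i² + 1)` for `i = k+1, …, d`, together with `1`
with multiplicity `m − d`, `−1` with multiplicity `n − d`, and `0` with multiplicity `2k`. -/
theorem charpoly_deflated_preconditioned (m n k : ℕ) (hk : k ≤ min m n)
    (M : Matrix (Fin m) (Fin m) ℝ) (N : Matrix (Fin n) (Fin n) ℝ)
    (A : Matrix (Fin m) (Fin n) ℝ)
    (hM : M.PosDef) (hN : N.PosDef)
    (Ut : Matrix (Fin m) (Fin m) ℝ) (Vt : Matrix (Fin n) (Fin n) ℝ)
    (Sig : Matrix (Fin m) (Fin n) ℝ)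
    (hUt : Utᵀ * M * Ut = 1) (hVt : Vtᵀ * N * Vt = 1)
    (hSigDiag : ∀ (i : Fin m) (j : Fin n), (i : ℕ) ≠ (j : ℕ) → Sig i j = 0)
    (hSigNonneg : ∀ (i : Fin m) (j : Fin n), (i : ℕ) = (j : ℕ) → 0 ≤ Sig i j)
    (hA : A = M * Ut * Sig * Vtᵀ * N)
    (Uk : Matrix (Fin m) (Fin k) ℝ)
    (hUkdef : Uk = Ut.submatrix id (Fin.castLE (hk.trans (min_le_left m n))))
    (Vk : Matrix (Fin n) (Fin k) ℝ)
    (hVkdef : Vk = Vt.submatrix id (Fin.castLE (hk.trans (min_le_right m n))))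
    (P : Matrix (Fin m) (Fin m) ℝ) (hP : P = 1 - M * Uk * Ukᵀ)
    (Q : Matrix (Fin n) (Fin n) ℝ) (hQ : Q = 1 - Vk * Vkᵀ * N)
    (K : Matrix (Fin m ⊕ Fin n) (Fin m ⊕ Fin n) ℝ)
    (hK : K = Matrix.fromBlocks M A Aᵀ (-N))
    (Pcal : Matrix (Fin m ⊕ Fin n) (Fin m ⊕ Fin n) ℝ)
    (hPcal : Pcal = Matrix.fromBlocks P 0 0 Qᵀ)
    (Hinvhalf : Matrix (Fin m ⊕ Fin n) (Fin m ⊕ Fin n) ℝ)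
    (hHinvhalf : Hinvhalf =
      Matrix.fromBlocks (CFC.sqrt M)⁻¹ 0 0 (CFC.sqrt N)⁻¹) :
    (Hinvhalf * Pcal * K * Hinvhalf).charpoly =
      X ^ (2 * k) * (X - 1) ^ (m - min m n) * (X + 1) ^ (n - min m n) *
        ∏ i : Fin (min m n),
          (if k ≤ (i : ℕ) then
            X ^ 2 - C ((Sig (Fin.castLE (min_le_left m n) i)
                (Fin.castLE (min_le_right m n) i)) ^ 2 + 1)
          else 1) :=
  charpoly_deflated_preconditioned_general m n k hk M N A hM hN Ut Vt Sig hUt hVt hSigDiag hA Uk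
    hUkdef Vk hVkdef P hP Q hQ K hK Pcal hPcal Hinvhalf hHinvhalf
end
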